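/- arXiv:1602.08345 — 10 statements merged into one kernel-verified Lean document; each statement's English description precedes it below -/
import Mathlib

section
/- Let T and Y be sets and let φ : T × T → Y be any function. If every function ψ : T → Y is representable by φ, then every function α : Y → Y has a fixed point, i.e. for every α : Y → Y there exists y ∈ Y with α(y) = y. -/
/-- LT2 (Yanofsky's version of Lawvere's fixed point theorem):
if every `ψ : T → Y` is representable by `φ : T × T → Y`, then every
`α : Y → Y` has a fixed point. -/
theorem lawvere_LT2 {T Y : Type*} (φ : T × T → Y)
    (h : ∀ ψ : T → Y, ∃ t : T, ∀ s : T, ψ s = φ (s, t)) :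
    ∀ α : Y → Y, ∃ y : Y, α y = y := by
  intro α
  obtain ⟨t, ht⟩ := h (fun s => α (φ (s, s)))
  exact ⟨φ (t, t), ht t⟩
end

section
/- Let C be a cartesian closed category with a terminal object ⊤, let T and Y be objects of C, and let g : T ⟶ Yᵀ be a morphism to the exponential object Yᵀ that is weakly point-surjective, meaning: for every morphism f : T ⟶ Y there exists a point t : ⊤ ⟶ T such that for every point x : ⊤ ⟶ T the point of Y obtained by evaluating g ∘ t at x (i.e. the composite of the pairing ⟨x, g ∘ t⟩ : ⊤ ⟶ T × Yᵀ with the evaluation morphism ev : T × Yᵀ ⟶ Y) equals f ∘ x. Then Y has the fixed point property: for every endomorphism α : Y ⟶ Y there exists a point y : ⊤ ⟶ Y with α ∘ y = y. -/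
open CategoryTheory CategoryTheory.Limits MonoidalCategory CartesianClosed

/-- Lawvere's fixed point theorem (categorical form): in a cartesian closed
category, if `g : T ⟶ Yᵀ` is weakly point-surjective (points being morphisms
out of the terminal object `𝟙_ C`), then `Y` has the fixed point property. -/
theorem lawvere_fixed_point {C : Type*} [Category C] [CartesianMonoidalCategory C]
    [MonoidalClosed C] (T Y : C) (g : T ⟶ (T ⟹ Y))
    (hg : ∀ f : T ⟶ Y, ∃ t : 𝟙_ C ⟶ T, ∀ x : 𝟙_ C ⟶ T,
      CartesianMonoidalCategory.lift x (t ≫ g) ≫ (ihom.ev T).app Y = x ≫ f) :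
    ∀ α : Y ⟶ Y, ∃ y : 𝟙_ C ⟶ Y, y ≫ α = y := by
  intro α
  obtain ⟨t, ht⟩ := hg (CartesianMonoidalCategory.lift (𝟙 T) g ≫ (ihom.ev T).app Y ≫ α)
  refine ⟨CartesianMonoidalCategory.lift t (t ≫ g) ≫ (ihom.ev T).app Y, ?_⟩
  have h := ht t
  rw [← Category.assoc, CartesianMonoidalCategory.comp_lift, Category.comp_id] at h
  simpa using h.symm
end

section
/- Let x, y, z ∈ ℂ with 1-y+yz ≠ 0, 1-z+zx ≠ 0 and 1-x+xy ≠ 0, and let (x',y',z') = F(x,y,z). Then x'y'z' = xyz and (1-x')(1-y')(1-z') = (1-x)(1-y)(1-z). Hence r = xyz and s = (1-x)(1-y)(1-z) are invariants of the three-dimensional Lotka–Volterra map. -/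
/-- The three-dimensional Lotka–Volterra map. -/
noncomputable def LV : ℂ × ℂ × ℂ → ℂ × ℂ × ℂ := fun p =>
  (p.1 * (1 - p.2.1 + p.2.1 * p.2.2) / (1 - p.2.2 + p.2.2 * p.1),
   p.2.1 * (1 - p.2.2 + p.2.2 * p.1) / (1 - p.1 + p.1 * p.2.1),
   p.2.2 * (1 - p.1 + p.1 * p.2.1) / (1 - p.2.1 + p.2.1 * p.2.2))

/-- `r = xyz` and `s = (1-x)(1-y)(1-z)` are invariants of the 3d
Lotka–Volterra map. -/
theorem LV_invariants (x y z : ℂ)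
    (h1 : 1 - y + y * z ≠ 0) (h2 : 1 - z + z * x ≠ 0) (h3 : 1 - x + x * y ≠ 0) :
    (LV (x, y, z)).1 * (LV (x, y, z)).2.1 * (LV (x, y, z)).2.2 = x * y * z ∧
    (1 - (LV (x, y, z)).1) * (1 - (LV (x, y, z)).2.1) * (1 - (LV (x, y, z)).2.2)
      = (1 - x) * (1 - y) * (1 - z) := by
  simp only [LV]
  have h2' : 1 - z + x * z ≠ 0 := by rw [mul_comm]; exact h2
  constructor
  · field_simp
  · field_simp
    ring
end

section
/- Let θ ∈ ℝ with sin θ ≠ 0 and cos θ ≠ 0, let n, m be positive integers with n·θ = m·π, and let u : ℕ → ℂ be a sequence satisfying the recurrence u(k+1) = (u(k) + tan²θ)/(1 - u(k)) for all k, such that u(k) ≠ 1 for all k < n. Then u(n) = u(0). -/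
/-- Every orbit of the Möbius recurrence `u(k+1) = (u(k) + tan²θ)/(1 - u(k))`
is periodic of period `n` when `nθ = mπ` (with `sin θ ≠ 0`, `cos θ ≠ 0`),
provided the orbit avoids the singular value `1` up to time `n`. -/
theorem moebius_orbit_periodic (θ : ℝ) (hs : Real.sin θ ≠ 0) (hc : Real.cos θ ≠ 0)
    (n m : ℕ) (hn : 0 < n) (hm : 0 < m) (h : (n : ℝ) * θ = (m : ℝ) * Real.pi)
    (u : ℕ → ℂ)
    (hrec : ∀ k : ℕ, u (k + 1) = (u k + (Real.tan θ : ℂ) ^ 2) / (1 - u k))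
    (hreg : ∀ k < n, u k ≠ 1) :
    u n = u 0 := by
  set t : ℂ := (Real.tan θ : ℂ) with ht
  have hcos : (Real.cos θ : ℂ) ≠ 0 := Complex.ofReal_ne_zero.mpr hc
  have hcos' : Complex.cos (θ : ℂ) ≠ 0 := by rwa [Complex.ofReal_cos] at hcos
  have hts : (Real.cos θ : ℂ) * t = (Real.sin θ : ℂ) := by
    rw [ht, Real.tan_eq_sin_div_cos]
    push_cast
    field_simp
  have he1 : (Real.cos θ : ℂ) * (1 + Complex.I * t) = Complex.exp (θ * Complex.I) := by
    rw [Complex.exp_mul_I, ← Complex.ofReal_cos, ← Complex.ofReal_sin]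
    linear_combination Complex.I * hts
  have he2 : (Real.cos θ : ℂ) * (1 - Complex.I * t) = Complex.exp (-(θ * Complex.I)) := by
    have : -(θ * Complex.I) = ((-θ : ℝ) : ℂ) * Complex.I := by push_cast; ring
    rw [this, Complex.exp_mul_I, ← Complex.ofReal_cos, ← Complex.ofReal_sin,
      Real.cos_neg, Real.sin_neg, Complex.ofReal_neg]
    linear_combination (-Complex.I) * hts
  set lam : ℂ := Complex.exp (2 * θ * Complex.I) with hlamdef
  have hlam : lam * (1 - Complex.I * t) = 1 + Complex.I * t := by
    apply mul_left_cancel₀ hcos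
    calc (Real.cos θ : ℂ) * (lam * (1 - Complex.I * t))
        = lam * ((Real.cos θ : ℂ) * (1 - Complex.I * t)) := by ring
      _ = Complex.exp (2 * θ * Complex.I) * Complex.exp (-(θ * Complex.I)) := by rw [he2]
      _ = Complex.exp (θ * Complex.I) := by rw [← Complex.exp_add]; ring_nf
      _ = (Real.cos θ : ℂ) * (1 + Complex.I * t) := he1.symm
  have hlamn : lam ^ n = 1 := by
    rw [hlamdef, ← Complex.exp_nat_mul]
    have h' : ((n : ℝ) : ℂ) * (θ : ℂ) = ((m : ℝ) : ℂ) * (Real.pi : ℂ) := by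
      exact_mod_cast congrArg (Complex.ofReal) h
    have : (n : ℂ) * (2 * θ * Complex.I) = (m : ℤ) * (2 * Real.pi * Complex.I) := by
      push_cast at h' ⊢
      linear_combination 2 * Complex.I * h'
    rw [this, Complex.exp_int_mul_two_pi_mul_I]
  have hI : Complex.I ^ 2 = -1 := Complex.I_sq
  have key : ∀ k ≤ n, (u k - Complex.I * t) * (u 0 + Complex.I * t)
      = lam ^ k * ((u k + Complex.I * t) * (u 0 - Complex.I * t)) := by
    intro k hk
    induction k with
    | zero => simp; ring
    | succ k ih =>
      have hk' : k < n := Nat.lt_of_succ_le hk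
      have ihh := ih (le_of_lt hk')
      have hne : (1 : ℂ) - u k ≠ 0 := by
        intro h0
        exact hreg k hk' (by linear_combination -h0)
      have heq : u (k + 1) * (1 - u k) = u k + t ^ 2 := by
        rw [hrec k]; field_simp
      have step1 : (u (k + 1) - Complex.I * t) * (1 - u k)
          = (1 + Complex.I * t) * (u k - Complex.I * t) := by
        linear_combination heq + t ^ 2 * hI
      have step2 : (u (k + 1) + Complex.I * t) * (1 - u k)
          = (1 - Complex.I * t) * (u k + Complex.I * t) := by
        linear_combination heq + t ^ 2 * hI
      apply mul_right_cancel₀ hne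
      calc (u (k + 1) - Complex.I * t) * (u 0 + Complex.I * t) * (1 - u k)
          = ((u (k + 1) - Complex.I * t) * (1 - u k)) * (u 0 + Complex.I * t) := by ring
        _ = (1 + Complex.I * t) * ((u k - Complex.I * t) * (u 0 + Complex.I * t)) := by
            rw [step1]; ring
        _ = (1 + Complex.I * t) * (lam ^ k * ((u k + Complex.I * t) * (u 0 - Complex.I * t))) := by
            rw [ihh]
        _ = lam ^ k * (lam * (1 - Complex.I * t)) *
              ((u k + Complex.I * t) * (u 0 - Complex.I * t)) := by rw [hlam]; ring
        _ = lam ^ (k + 1) * ((u (k + 1) + Complex.I * t) * (1 - u k)) *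
              (u 0 - Complex.I * t) := by rw [step2]; ring
        _ = lam ^ (k + 1) * ((u (k + 1) + Complex.I * t) * (u 0 - Complex.I * t)) * (1 - u k) := by
            ring
  have hkey := key n le_rfl
  rw [hlamn, one_mul] at hkey
  have htne : t ≠ 0 := by
    rw [ht, Complex.ofReal_ne_zero, Real.tan_eq_sin_div_cos]
    exact div_ne_zero hs hc
  have h2 : 2 * Complex.I * t * u n = 2 * Complex.I * t * u 0 := by
    linear_combination hkey
  exact mul_left_cancel₀ (by simp [Complex.I_ne_zero, htne]) h2
end

section
/- Let n ≥ 3 and let m be an integer with 1 ≤ m ≤ n-1 and 2m ≠ n. Let (x₀,y₀) ∈ ℂ² satisfy x₀·y₀ = -tan²(πm/n), and suppose that for every k < n the k-th iterate (x_k, y_k) = f₀^{[k]}(x₀,y₀) satisfies x_k ≠ 1 and y_k ≠ 1. Then f₀^{[n]}(x₀,y₀) = (x₀,y₀), i.e. (x₀,y₀) is a periodic point of period n of f₀. Thus the invariant variety of periodic points of period n of f₀ is v⁽ⁿ⁾ = {(x,y) ∈ ℂ² : xy + tan²(πm/n) = 0, m = 1,…,n-1}. -/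
/-- The integrable map `f₀(x,y) = (x(1-y)/(1-x), y(1-x)/(1-y))`. -/
noncomputable def f0 : ℂ × ℂ → ℂ × ℂ := fun p =>
  (p.1 * (1 - p.2) / (1 - p.1), p.2 * (1 - p.1) / (1 - p.2))

/-- Every point of the invariant variety `xy + tan²(πm/n) = 0` (with
`1 ≤ m ≤ n-1`, `2m ≠ n`) whose orbit avoids the singular lines `x = 1`,
`y = 1` up to time `n` is a periodic point of period `n` of `f₀`; thus
`v⁽ⁿ⁾ = {xy + tan²(πm/n) = 0}` is the IVPP of period `n`. -/
theorem f0_IVPP (n m : ℕ) (hn : 3 ≤ n) (hm1 : 1 ≤ m) (hm2 : m ≤ n - 1)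
    (hm3 : 2 * m ≠ n) (x₀ y₀ : ℂ)
    (hxy : x₀ * y₀ = -(Real.tan (Real.pi * m / n) : ℂ) ^ 2)
    (hreg : ∀ k < n, (f0^[k] (x₀, y₀)).1 ≠ 1 ∧ (f0^[k] (x₀, y₀)).2 ≠ 1) :
    f0^[n] (x₀, y₀) = (x₀, y₀) := by
  have hmn : m < n := by omega
  have hnR : (0:ℝ) < n := by positivity
  have hπ : (0:ℝ) < Real.pi := Real.pi_pos
  set θ : ℝ := Real.pi * m / n with hθdef
  have hθpos : 0 < θ := by
    have : (0:ℝ) < m := by exact_mod_cast hm1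
    positivity
  have hθlt : θ < Real.pi := by
    rw [hθdef, div_lt_iff₀ hnR]
    have hmn' : (m:ℝ) < n := by exact_mod_cast hmn
    nlinarith
  have hθne : θ ≠ Real.pi / 2 := by
    intro h
    rw [hθdef, div_eq_div_iff (ne_of_gt hnR) (by norm_num : (2:ℝ) ≠ 0)] at h
    have : (2:ℝ) * m = n := by nlinarith
    exact hm3 (by exact_mod_cast this)
  have hcos : Real.cos θ ≠ 0 := by
    intro h
    obtain ⟨k, hk⟩ := Real.cos_eq_zero_iff.mp h
    have h1 : (0:ℝ) < (2 * (k:ℝ) + 1) * Real.pi / 2 := by rw [← hk]; exact hθpos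
    have h2 : (2 * (k:ℝ) + 1) * Real.pi / 2 < Real.pi := by rw [← hk]; exact hθlt
    have hk1 : (0:ℤ) ≤ k := by
      by_contra hc
      push_neg at hc
      have : (k:ℝ) ≤ -1 := by exact_mod_cast (by omega : k ≤ -1)
      nlinarith
    have hk2 : k < 1 := by
      by_contra hc
      push_neg at hc
      have : (1:ℝ) ≤ k := by exact_mod_cast hc
      nlinarith
    have hk0 : k = 0 := by omega
    subst hk0
    apply hθne
    rw [hk]; push_cast; ring
  have hsin : Real.sin θ ≠ 0 := ne_of_gt (Real.sin_pos_of_pos_of_lt_pi hθpos hθlt)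
  have htR : Real.tan θ ≠ 0 := by
    rw [Real.tan_eq_sin_div_cos]
    exact div_ne_zero hsin hcos
  set t : ℂ := ((Real.tan θ : ℝ) : ℂ) with htdef
  have ht : t ≠ 0 := by
    simp only [htdef, ne_eq, Complex.ofReal_eq_zero]
    exact htR
  have hxyt : x₀ * y₀ = -t ^ 2 := hxy
  have hx0 : x₀ ≠ 0 := by
    intro h
    rw [h, zero_mul] at hxyt
    exact ht (by
      have : t ^ 2 = 0 := by linear_combination hxyt
      exact pow_eq_zero_iff (by norm_num) |>.mp this)
  set l : ℂ := 1 + t * Complex.I with hldef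
  set u : ℂ := 1 - t * Complex.I with hudef
  -- key spectral fact : l^n = u^n
  have hc : ((Real.cos θ : ℝ) : ℂ) ≠ 0 := by
    simp only [ne_eq, Complex.ofReal_eq_zero]; exact hcos
  have hct : ((Real.cos θ : ℝ) : ℂ) * t = ((Real.sin θ : ℝ) : ℂ) := by
    rw [htdef, ← Complex.ofReal_mul]
    congr 1
    rw [Real.tan_eq_sin_div_cos]
    field_simp
  have hcl : ((Real.cos θ : ℝ) : ℂ) * l = Complex.exp (θ * Complex.I) := by
    rw [Complex.exp_mul_I, ← Complex.ofReal_cos, ← Complex.ofReal_sin, hldef]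
    linear_combination Complex.I * hct
  have hcu : ((Real.cos θ : ℝ) : ℂ) * u = Complex.exp (-(θ * Complex.I)) := by
    rw [show -((θ:ℂ) * Complex.I) = ((-θ : ℝ) : ℂ) * Complex.I by push_cast; ring,
      Complex.exp_mul_I, Complex.ofReal_neg, Complex.cos_neg, Complex.sin_neg,
      ← Complex.ofReal_cos, ← Complex.ofReal_sin, hudef]
    linear_combination (-Complex.I) * hct
  have hnC : (n : ℂ) ≠ 0 := Nat.cast_ne_zero.mpr (by omega)
  have hnθ : (n : ℂ) * θ = (Real.pi : ℂ) * m := by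
    have : ((θ : ℝ) : ℂ) = (Real.pi : ℂ) * m / n := by rw [hθdef]; push_cast; ring
    rw [this]
    field_simp
  have hlu : u ^ n = l ^ n := by
    have h1 : (((Real.cos θ : ℝ) : ℂ)) ^ n * l ^ n = ((-1 : ℂ)) ^ m := by
      rw [← mul_pow, hcl, ← Complex.exp_nat_mul,
        show (n : ℂ) * (θ * Complex.I) = ((Real.pi : ℂ) * m) * Complex.I by
          rw [← mul_assoc, hnθ],
        show ((Real.pi : ℂ) * m) * Complex.I = (m : ℂ) * ((Real.pi : ℂ) * Complex.I) by ring,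
        Complex.exp_nat_mul, Complex.exp_pi_mul_I]
    have h2 : (((Real.cos θ : ℝ) : ℂ)) ^ n * u ^ n = ((-1 : ℂ)) ^ m := by
      rw [← mul_pow, hcu, ← Complex.exp_nat_mul,
        show (n : ℂ) * -(θ * Complex.I) = -(((m : ℂ)) * ((Real.pi : ℂ) * Complex.I)) by
          rw [show (n : ℂ) * -(θ * Complex.I) = -(((n:ℂ) * θ) * Complex.I) by ring, hnθ]; ring,
        Complex.exp_neg, Complex.exp_nat_mul, Complex.exp_pi_mul_I, ← inv_pow]
      norm_num
    have := h1.trans h2.symm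
    exact mul_left_cancel₀ (pow_ne_zero _ hc) this.symm
  set CC : ℂ := (1 + Complex.I * x₀ / t) / 2 with hCCdef
  set DD : ℂ := (1 - Complex.I * x₀ / t) / 2 with hDDdef
  have hb0 : CC + DD = 1 := by rw [hCCdef, hDDdef]; ring
  have ha0 : -(Complex.I * t) * CC + Complex.I * t * DD = x₀ := by
    rw [hCCdef, hDDdef]
    field_simp
    linear_combination (-2 * x₀) * Complex.I_sq
  have key : ∀ k, k ≤ n →
      f0^[k] (x₀, y₀) =
        ((-(Complex.I * t) * CC * l ^ k + Complex.I * t * DD * u ^ k) /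
            (CC * l ^ k + DD * u ^ k),
          x₀ * y₀ * (CC * l ^ k + DD * u ^ k) /
            (-(Complex.I * t) * CC * l ^ k + Complex.I * t * DD * u ^ k)) ∧
        (-(Complex.I * t) * CC * l ^ k + Complex.I * t * DD * u ^ k) ≠ 0 ∧
        (CC * l ^ k + DD * u ^ k) ≠ 0 := by
    intro k
    induction k with
    | zero =>
      intro _
      simp only [pow_zero, mul_one, Function.iterate_zero_apply]
      rw [ha0, hb0]
      refine ⟨?_, hx0, one_ne_zero⟩
      rw [Prod.mk.injEq]
      refine ⟨by rw [div_one], ?_⟩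
      rw [mul_one, mul_comm x₀ y₀, mul_div_assoc, div_self hx0, mul_one]
    | succ k ih =>
      intro hk1
      have hkn : k < n := hk1
      obtain ⟨heq, hA, hB⟩ := ih (le_of_lt hkn)
      set A : ℂ := -(Complex.I * t) * CC * l ^ k + Complex.I * t * DD * u ^ k with hAdef
      set B : ℂ := CC * l ^ k + DD * u ^ k with hBdef
      have hA' : -(Complex.I * t) * CC * l ^ (k+1) + Complex.I * t * DD * u ^ (k+1)
          = A + t ^ 2 * B := by
        rw [hAdef, hBdef, pow_succ, pow_succ, hldef, hudef]
        linear_combination (-(t^2) * (CC * l ^ k + DD * u ^ k)) * Complex.I_sq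
      have hB' : CC * l ^ (k+1) + DD * u ^ (k+1) = B - A := by
        rw [hAdef, hBdef, pow_succ, pow_succ, hldef, hudef]
        ring
      obtain ⟨hx1, hy1⟩ := hreg k hkn
      rw [heq] at hx1 hy1
      have hBA : B - A ≠ 0 := by
        intro h
        apply hx1
        have : A = B := by linear_combination -h
        rw [this]
        exact div_self hB
      have hAtB : A + t ^ 2 * B ≠ 0 := by
        intro h
        apply hy1
        have hAB : x₀ * y₀ * B = A := by
          rw [hxyt]; linear_combination -h
        rw [hAB]
        exact div_self hA
      rw [Function.iterate_succ_apply', heq, hA', hB']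
      refine ⟨?_, hAtB, hBA⟩
      simp only [f0]
      rw [Prod.mk.injEq]
      constructor
      · rw [hxyt]
        field_simp
        ring
      · rw [hxyt]
        field_simp
        linear_combination (-1:ℂ) * mul_inv_cancel₀ hAtB
  obtain ⟨heq, hA, hB⟩ := key n le_rfl
  have han : -(Complex.I * t) * CC * l ^ n + Complex.I * t * DD * u ^ n = x₀ * l ^ n := by
    rw [hlu]
    linear_combination (l ^ n) * ha0
  have hbn : CC * l ^ n + DD * u ^ n = l ^ n := by
    rw [hlu]
    linear_combination (l ^ n) * hb0
  rw [han] at heq hA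
  rw [hbn] at heq hB
  have hy0 : y₀ = x₀ * y₀ / x₀ := by field_simp
  rw [heq, Prod.mk.injEq]
  constructor
  · field_simp
  · rw [mul_comm x₀ (l ^ n)] at hA ⊢
    field_simp
end

section
/- Let (x₀,y₀) ∈ ℂ² satisfy x₀·y₀ = -3, and suppose that for every k < 3 the k-th iterate (x_k, y_k) = f₀^{[k]}(x₀,y₀) satisfies x_k ≠ 1 and y_k ≠ 1. Then f₀^{[3]}(x₀,y₀) = (x₀,y₀). Hence γ⁽³⁾(r) = r + 3 defines the invariant variety of period-3 points of f₀. -/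
lemma f0_step (x y : ℂ) (hxy : x * y = -3) (hx : x ≠ 1) (hy : y ≠ 1) :
    f0 (x, y) = ((x + 3) / (1 - x), (y + 3) / (1 - y)) := by
  have hx' : (1 : ℂ) - x ≠ 0 := sub_ne_zero.mpr (Ne.symm hx)
  have hy' : (1 : ℂ) - y ≠ 0 := sub_ne_zero.mpr (Ne.symm hy)
  simp only [f0, Prod.mk.injEq]
  constructor
  · congr 1; linear_combination -hxy
  · congr 1; linear_combination -hxy

/-- Points with `x₀y₀ = -3` whose orbits avoid the singular lines are periodic
points of period 3 of `f₀`: `γ⁽³⁾(r) = r + 3` defines the period-3 IVPP. -/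
theorem f0_IVPP_period3 (x₀ y₀ : ℂ) (hxy : x₀ * y₀ = -3)
    (hreg : ∀ k < 3, (f0^[k] (x₀, y₀)).1 ≠ 1 ∧ (f0^[k] (x₀, y₀)).2 ≠ 1) :
    f0^[3] (x₀, y₀) = (x₀, y₀) := by
  obtain ⟨hx0, hy0⟩ := hreg 0 (by norm_num)
  simp only [Function.iterate_zero, id] at hx0 hy0
  have hx0' : (1 : ℂ) - x₀ ≠ 0 := sub_ne_zero.mpr (Ne.symm hx0)
  have hy0' : (1 : ℂ) - y₀ ≠ 0 := sub_ne_zero.mpr (Ne.symm hy0)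
  have e1 : f0 (x₀, y₀) = ((x₀ + 3) / (1 - x₀), (y₀ + 3) / (1 - y₀)) :=
    f0_step _ _ hxy hx0 hy0
  have h1 := hreg 1 (by norm_num)
  rw [Function.iterate_one, e1] at h1
  obtain ⟨hx1, hy1⟩ := h1
  have hxy1 : (x₀ + 3) / (1 - x₀) * ((y₀ + 3) / (1 - y₀)) = -3 := by
    rw [div_mul_div_comm, div_eq_iff (mul_ne_zero hx0' hy0')]
    linear_combination 4 * hxy
  have hpx : (1 : ℂ) + x₀ ≠ 0 := by
    intro h
    apply hx1
    have : x₀ = -1 := by linear_combination h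
    rw [this]; norm_num
  have hpy : (1 : ℂ) + y₀ ≠ 0 := by
    intro h
    apply hy1
    have : y₀ = -1 := by linear_combination h
    rw [this]; norm_num
  have hx1' : (1 : ℂ) - (x₀ + 3) / (1 - x₀) ≠ 0 := sub_ne_zero.mpr (Ne.symm hx1)
  have hy1' : (1 : ℂ) - (y₀ + 3) / (1 - y₀) ≠ 0 := sub_ne_zero.mpr (Ne.symm hy1)
  have e2 : f0 ((x₀ + 3) / (1 - x₀), (y₀ + 3) / (1 - y₀)) =
      ((x₀ - 3) / (1 + x₀), (y₀ - 3) / (1 + y₀)) := by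
    rw [f0_step _ _ hxy1 hx1 hy1]
    congr 1
    · rw [div_eq_div_iff hx1' hpx]
      field_simp
      ring
    · rw [div_eq_div_iff hy1' hpy]
      field_simp
      ring
  have h2 := hreg 2 (by norm_num)
  have hit2 : f0^[2] (x₀, y₀) = ((x₀ - 3) / (1 + x₀), (y₀ - 3) / (1 + y₀)) := by
    simp only [Function.iterate_succ, Function.iterate_zero, Function.comp_apply, id,
      Function.iterate_one]
    rw [e1, e2]
  rw [hit2] at h2
  obtain ⟨hx2, hy2⟩ := h2
  have hxy2 : (x₀ - 3) / (1 + x₀) * ((y₀ - 3) / (1 + y₀)) = -3 := by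
    rw [div_mul_div_comm, div_eq_iff (mul_ne_zero hpx hpy)]
    linear_combination 4 * hxy
  have hx2' : (1 : ℂ) - (x₀ - 3) / (1 + x₀) ≠ 0 := sub_ne_zero.mpr (Ne.symm hx2)
  have hy2' : (1 : ℂ) - (y₀ - 3) / (1 + y₀) ≠ 0 := sub_ne_zero.mpr (Ne.symm hy2)
  have e3 : f0 ((x₀ - 3) / (1 + x₀), (y₀ - 3) / (1 + y₀)) = (x₀, y₀) := by
    rw [f0_step _ _ hxy2 hx2 hy2]
    congr 1
    · rw [div_eq_iff hx2']
      field_simp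
      ring
    · rw [div_eq_iff hy2']
      field_simp
      ring
  show f0 (f0^[2] (x₀, y₀)) = (x₀, y₀)
  rw [hit2, e3]
end

section
/- Let (x₀,y₀) ∈ ℂ² satisfy x₀·y₀ = -1, and suppose that for every k < 4 the k-th iterate (x_k, y_k) = f₀^{[k]}(x₀,y₀) satisfies x_k ≠ 1 and y_k ≠ 1. Then f₀^{[4]}(x₀,y₀) = (x₀,y₀). Hence γ⁽⁴⁾(r) = r + 1 defines the invariant variety of period-4 points of f₀. -/
set_option linter.unreachableTactic false
set_option linter.unusedTactic false


/-- Points with `x₀y₀ = -1` whose orbits avoid the singular lines are periodic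
points of period 4 of `f₀`: `γ⁽⁴⁾(r) = r + 1` defines the period-4 IVPP. -/
theorem f0_IVPP_period4 (x₀ y₀ : ℂ) (hxy : x₀ * y₀ = -1)
    (hreg : ∀ k < 4, (f0^[k] (x₀, y₀)).1 ≠ 1 ∧ (f0^[k] (x₀, y₀)).2 ≠ 1) :
    f0^[4] (x₀, y₀) = (x₀, y₀) := by
  obtain ⟨hx0, hy0⟩ := hreg 0 (by norm_num)
  simp only [Function.iterate_zero, id_eq] at hx0 hy0
  have h0 : x₀ ≠ 0 := by rintro rfl; simp at hxy
  have hy0' : y₀ = -1 / x₀ := by field_simp; linear_combination hxy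
  have hm1 : x₀ ≠ -1 := by
    rintro rfl
    apply hy0
    rw [hy0']; norm_num
  subst hy0'
  have d1 : 1 - x₀ ≠ 0 := sub_ne_zero.mpr (Ne.symm hx0)
  have d2 : x₀ + 1 ≠ 0 := by
    intro h; apply hm1; linear_combination h
  have dm : 1 - -1 / x₀ ≠ 0 := by
    intro h; apply d2
    field_simp at h
    linear_combination h
  have dA : 1 - (x₀ + 1) / (1 - x₀) ≠ 0 := by
    intro h; apply h0
    field_simp at h
    linear_combination -h / 2
  have dB : 1 - (x₀ - 1) / (x₀ + 1) ≠ 0 := by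
    intro h
    field_simp at h
    have h2 : (2:ℂ) = 0 := by linear_combination h
    exact two_ne_zero h2
  have sA : 1 - (x₀ + 1) / (1 - x₀) = -2 * x₀ / (1 - x₀) := by field_simp; ring
  have sB : 1 - (x₀ - 1) / (x₀ + 1) = 2 / (x₀ + 1) := by field_simp; ring
  have sm : 1 - -1 / x₀ = (x₀ + 1) / x₀ := by field_simp; ring
  have e1 : f0 (x₀, -1 / x₀) = ((x₀ + 1) / (1 - x₀), (x₀ - 1) / (x₀ + 1)) := by
    simp only [f0, sm, Prod.mk.injEq]
    constructor <;> field_simp <;> ring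
  have e2 : f0 ((x₀ + 1) / (1 - x₀), (x₀ - 1) / (x₀ + 1)) = (-1 / x₀, x₀) := by
    simp only [f0, sA, sB, Prod.mk.injEq]
    constructor <;> field_simp <;> ring
  have e3 : f0 (-1 / x₀, x₀) = ((x₀ - 1) / (x₀ + 1), (x₀ + 1) / (1 - x₀)) := by
    simp only [f0, sm, Prod.mk.injEq]
    constructor <;> field_simp <;> ring
  have e4 : f0 ((x₀ - 1) / (x₀ + 1), (x₀ + 1) / (1 - x₀)) = (x₀, -1 / x₀) := by
    simp only [f0, sA, sB, Prod.mk.injEq]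
    constructor <;> field_simp <;> ring
  show f0 (f0 (f0 (f0 (x₀, -1 / x₀)))) = (x₀, -1 / x₀)
  rw [e1, e2, e3, e4]
end

section
/- Let (x₀,y₀) ∈ ℂ² satisfy (x₀y₀)² + 10·x₀y₀ + 5 = 0, and suppose that for every k < 5 the k-th iterate (x_k, y_k) = f₀^{[k]}(x₀,y₀) satisfies x_k ≠ 1 and y_k ≠ 1. Then f₀^{[5]}(x₀,y₀) = (x₀,y₀). Hence γ⁽⁵⁾(r) = r² + 10r + 5 defines the invariant variety of period-5 points of f₀. -/
/-- One step of `f₀`, with denominators cleared. -/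
lemma f0_step_s11 (p : ℂ × ℂ) (hx : p.1 ≠ 1) (hy : p.2 ≠ 1) :
    (f0 p).1 * (1 - p.1) = p.1 - p.1 * p.2 ∧
    (f0 p).2 * (1 - p.2) = p.2 - p.1 * p.2 ∧
    (f0 p).1 * (f0 p).2 = p.1 * p.2 := by
  have hx' : (1 : ℂ) - p.1 ≠ 0 := sub_ne_zero.mpr (Ne.symm hx)
  have hy' : (1 : ℂ) - p.2 ≠ 0 := sub_ne_zero.mpr (Ne.symm hy)
  refine ⟨?_, ?_, ?_⟩ <;> simp only [f0] <;> field_simp <;> ring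

/-- Points with `(x₀y₀)² + 10x₀y₀ + 5 = 0` whose orbits avoid the singular
lines are periodic points of period 5 of `f₀`: `γ⁽⁵⁾(r) = r² + 10r + 5`
defines the period-5 IVPP. -/
theorem f0_IVPP_period5 (x₀ y₀ : ℂ)
    (hxy : (x₀ * y₀) ^ 2 + 10 * (x₀ * y₀) + 5 = 0)
    (hreg : ∀ k < 5, (f0^[k] (x₀, y₀)).1 ≠ 1 ∧ (f0^[k] (x₀, y₀)).2 ≠ 1) :
    f0^[5] (x₀, y₀) = (x₀, y₀) := by
  have h0 := hreg 0 (by norm_num)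
  have h1 := hreg 1 (by norm_num)
  have h2 := hreg 2 (by norm_num)
  have h3 := hreg 3 (by norm_num)
  have h4 := hreg 4 (by norm_num)
  simp only [Function.iterate_succ_apply', Function.iterate_zero_apply,
    Function.iterate_one] at h0 h1 h2 h3 h4 ⊢
  set r : ℂ := x₀ * y₀ with hr
  set A : ℂ × ℂ := (x₀, y₀) with hA
  have hA1 : A.1 = x₀ := rfl
  have hA2 : A.2 = y₀ := rfl
  set B : ℂ × ℂ := f0 A with hB
  set C : ℂ × ℂ := f0 B with hC
  set D : ℂ × ℂ := f0 C with hD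
  set E : ℂ × ℂ := f0 D with hE
  set F : ℂ × ℂ := f0 E with hF
  have s0 := f0_step_s11 A h0.1 h0.2
  have s1 := f0_step_s11 B h1.1 h1.2
  have s2 := f0_step_s11 C h2.1 h2.2
  have s3 := f0_step_s11 D h3.1 h3.2
  have s4 := f0_step_s11 E h4.1 h4.2
  -- the invariant r = x*y along the orbit
  have rA : A.1 * A.2 = r := rfl
  have rB : B.1 * B.2 = r := by rw [← rA]; exact s0.2.2
  have rC : C.1 * C.2 = r := by rw [← rB]; exact s1.2.2
  have rD : D.1 * D.2 = r := by rw [← rC]; exact s2.2.2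
  have rE : E.1 * E.2 = r := by rw [← rD]; exact s3.2.2
  -- Möbius recursion for the first coordinate
  have eB : B.1 * (1 - x₀) = x₀ - r := by have := s0.1; rw [rA] at this; exact this
  have eC : C.1 * (1 - B.1) = B.1 - r := by have := s1.1; rw [rB] at this; exact this
  have eD : D.1 * (1 - C.1) = C.1 - r := by have := s2.1; rw [rC] at this; exact this
  have eE : E.1 * (1 - D.1) = D.1 - r := by have := s3.1; rw [rD] at this; exact this
  have eF : F.1 * (1 - E.1) = E.1 - r := by have := s4.1; rw [rE] at this; exact this
  -- Möbius recursion for the second coordinate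
  have fB : B.2 * (1 - y₀) = y₀ - r := by
    have := s0.2.1; rw [rA] at this; exact this
  have fC : C.2 * (1 - B.2) = B.2 - r := by have := s1.2.1; rw [rB] at this; exact this
  have fD : D.2 * (1 - C.2) = C.2 - r := by have := s2.2.1; rw [rC] at this; exact this
  have fE : E.2 * (1 - D.2) = D.2 - r := by have := s3.2.1; rw [rD] at this; exact this
  have fF : F.2 * (1 - E.2) = E.2 - r := by have := s4.2.1; rw [rE] at this; exact this
  -- compose the Möbius maps: x direction
  have k2 : C.1 * (1 + r - 2 * x₀) = (1 + r) * x₀ - 2 * r := by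
    linear_combination (1 - x₀) * eC + (C.1 + 1) * eB
  have k3 : D.1 * (1 + 3 * r - (3 + r) * x₀) = (1 + 3 * r) * x₀ - (3 * r + r ^ 2) := by
    linear_combination (1 + r - 2 * x₀) * eD + (D.1 + 1) * k2
  have k4 : E.1 * (1 + 6 * r + r ^ 2 - (4 + 4 * r) * x₀) =
      (1 + 6 * r + r ^ 2) * x₀ - (4 * r + 4 * r ^ 2) := by
    linear_combination (1 + 3 * r - (3 + r) * x₀) * eE + (E.1 + 1) * k3
  have k5 : F.1 * (-24 - 40 * r) = (-24 - 40 * r) * x₀ := by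
    linear_combination (1 + 6 * r + r ^ 2 - (4 + 4 * r) * x₀) * eF + (F.1 + 1) * k4 +
      ((x₀ - 5) * F.1 + 5 * x₀ - r) * hxy
  -- compose the Möbius maps: y direction
  have l2 : C.2 * (1 + r - 2 * y₀) = (1 + r) * y₀ - 2 * r := by
    linear_combination (1 - y₀) * fC + (C.2 + 1) * fB
  have l3 : D.2 * (1 + 3 * r - (3 + r) * y₀) = (1 + 3 * r) * y₀ - (3 * r + r ^ 2) := by
    linear_combination (1 + r - 2 * y₀) * fD + (D.2 + 1) * l2
  have l4 : E.2 * (1 + 6 * r + r ^ 2 - (4 + 4 * r) * y₀) =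
      (1 + 6 * r + r ^ 2) * y₀ - (4 * r + 4 * r ^ 2) := by
    linear_combination (1 + 3 * r - (3 + r) * y₀) * fE + (E.2 + 1) * l3
  have l5 : F.2 * (-24 - 40 * r) = (-24 - 40 * r) * y₀ := by
    linear_combination (1 + 6 * r + r ^ 2 - (4 + 4 * r) * y₀) * fF + (F.2 + 1) * l4 +
      ((y₀ - 5) * F.2 + 5 * y₀ - r) * hxy
  have hc : (-24 - 40 * r : ℂ) ≠ 0 := by
    intro h
    have hr' : r = -3 / 5 := by linear_combination -h / 40
    rw [hr'] at hxy
    norm_num at hxy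
  have hF1 : F.1 = x₀ := by
    apply mul_right_cancel₀ hc
    linear_combination k5
  have hF2 : F.2 = y₀ := by
    apply mul_right_cancel₀ hc
    linear_combination l5
  exact Prod.ext hF1 hF2
end

section
/- Let (x,y,z) ∈ ℂ³ satisfy (1-x)(1-y)(1-z) = -1, and suppose that the denominators 1-y+yz, 1-z+zx, 1-x+xy are nonzero both at (x,y,z) and at F(x,y,z). Then F(F(x,y,z)) = (x,y,z). Hence γ⁽²⁾(r,s) = s + 1 defines the invariant variety of period-2 points of the three-dimensional Lotka–Volterra map. -/
/-- The three denominators of the Lotka–Volterra map are nonzero at `p`. -/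
def LVreg (p : ℂ × ℂ × ℂ) : Prop :=
  1 - p.2.1 + p.2.1 * p.2.2 ≠ 0 ∧ 1 - p.2.2 + p.2.2 * p.1 ≠ 0 ∧
    1 - p.1 + p.1 * p.2.1 ≠ 0

set_option maxHeartbeats 1000000 in
/-- Points with `s = (1-x)(1-y)(1-z) = -1` at which the map is regular (at the
point and its image) are periodic points of period 2 of the 3d Lotka–Volterra
map: `γ⁽²⁾(r,s) = s + 1` defines the period-2 IVPP. -/
theorem LV_IVPP_period2 (x y z : ℂ)
    (hs : (1 - x) * (1 - y) * (1 - z) = -1)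
    (h0 : LVreg (x, y, z)) (h1 : LVreg (LV (x, y, z))) :
    LV (LV (x, y, z)) = (x, y, z) := by
  obtain ⟨ha, hb, hc⟩ := h0
  obtain ⟨h1a, h1b, h1c⟩ := h1
  simp only [LV, LVreg] at h1a h1b h1c ⊢
  field_simp at h1a h1b h1c
  simp only [Prod.mk.injEq] at ha hb hc ⊢
  have hDa : 1 - y * (1 - z + z * x) / (1 - x + x * y) +
      y * (1 - z + z * x) / (1 - x + x * y) * (z * (1 - x + x * y) / (1 - y + y * z)) ≠ 0 := by
    intro h; apply h1a; rw [← h]; field_simp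
  have hDb : 1 - z * (1 - x + x * y) / (1 - y + y * z) +
      z * (1 - x + x * y) / (1 - y + y * z) * (x * (1 - y + y * z) / (1 - z + z * x)) ≠ 0 := by
    intro h; apply h1b; rw [← h]; field_simp [show 1 - y + z * y ≠ 0 by rwa [mul_comm z y], show 1 - z + x * z ≠ 0 by rwa [mul_comm x z], show 1 - x + y * x ≠ 0 by rwa [mul_comm y x]]
  have hDc : 1 - x * (1 - y + y * z) / (1 - z + z * x) +
      x * (1 - y + y * z) / (1 - z + z * x) * (y * (1 - z + z * x) / (1 - x + x * y)) ≠ 0 := by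
    intro h; apply h1c; rw [← h]; field_simp
  refine ⟨?_, ?_, ?_⟩
  · rw [div_eq_iff hDb]
    field_simp [show 1 - y + z * y ≠ 0 by rwa [mul_comm z y], show 1 - z + x * z ≠ 0 by rwa [mul_comm x z], show 1 - x + y * x ≠ 0 by rwa [mul_comm y x]]
    linear_combination ((1)*x^3*y^2*z^1 + (-2)*x^3*y^1*z^1 + (1)*x^3*z^1 + (-1)*x^2*y^2*z^2 + (1)*x^2*y^2*z^1 + (1)*x^2*y^1*z^1 + (-2)*x^2*z^1 + (1)*x^1*y^2*z^2 + (-2)*x^1*y^2*z^1 + (1)*x^1*y^2 + (1)*x^1*y^1*z^1 + (-1)*x^1*y^1 + (1)*x^1*z^1) * hs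
  · rw [div_eq_iff hDc]
    field_simp [show 1 - y + z * y ≠ 0 by rwa [mul_comm z y], show 1 - z + x * z ≠ 0 by rwa [mul_comm x z], show 1 - x + y * x ≠ 0 by rwa [mul_comm y x]]
    linear_combination ((-1)*x^2*y^2*z^2 + (1)*x^2*y^1*z^2 + (1)*x^1*y^3*z^2 + (-2)*x^1*y^3*z^1 + (1)*x^1*y^3 + (1)*x^1*y^2*z^2 + (1)*x^1*y^2*z^1 + (-2)*x^1*y^2 + (-2)*x^1*y^1*z^2 + (1)*x^1*y^1*z^1 + (1)*x^1*y^1 + (1)*y^1*z^2 + (-1)*y^1*z^1) * hs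
  · rw [div_eq_iff hDa]
    field_simp [show 1 - y + z * y ≠ 0 by rwa [mul_comm z y], show 1 - z + x * z ≠ 0 by rwa [mul_comm x z], show 1 - x + y * x ≠ 0 by rwa [mul_comm y x]]
    linear_combination ((-1)*x^2*y^2*z^2 + (1)*x^2*y^2*z^1 + (1)*x^2*y^1*z^3 + (1)*x^2*y^1*z^2 + (-2)*x^2*y^1*z^1 + (1)*x^2*z^1 + (-2)*x^1*y^1*z^3 + (1)*x^1*y^1*z^2 + (1)*x^1*y^1*z^1 + (-1)*x^1*z^1 + (1)*y^1*z^3 + (-2)*y^1*z^2 + (1)*y^1*z^1) * hs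
end

section
/- For every t ∈ ℂ with t ≠ 0 and t ≠ 1, the point (x,y,z) = (1 - 1/t, 1/(1-t), t) on the curve Λ⁺ satisfies 1-y+yz = 0, 1-z+zx = 0 and 1-x+xy = 0; that is, every numerator and every denominator of the three components of the three-dimensional Lotka–Volterra map vanishes on Λ⁺, so Λ⁺ is a curve of indeterminate (singular) points of the map. -/
/-- On the curve `Λ⁺ = {(1-1/t, 1/(1-t), t)}` all three factors
`1-y+yz`, `1-z+zx`, `1-x+xy` vanish, so every numerator and every denominator
of the 3d Lotka–Volterra map vanishes: `Λ⁺` is a curve of indeterminate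
(singular) points of the map. -/
theorem LambdaPlus_singular (t : ℂ) (ht0 : t ≠ 0) (ht1 : t ≠ 1) :
    let x : ℂ := 1 - 1 / t
    let y : ℂ := 1 / (1 - t)
    let z : ℂ := t
    1 - y + y * z = 0 ∧ 1 - z + z * x = 0 ∧ 1 - x + x * y = 0 := by
  have h1 : (1 : ℂ) - t ≠ 0 := sub_ne_zero.mpr (Ne.symm ht1)
  refine ⟨?_, ?_, ?_⟩ <;> field_simp <;> ring
end
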